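/- arXiv:2308.16294 — 4 statements merged into one kernel-verified Lean document; each statement's English description precedes it below -/
import Mathlib

section
/- Let p ≥ 2, q = p/(p-1), δ = q(q-1)/8, and define B(u,v) = u^p + v^q + δ·((2/p)u^p + (2/q − 1)v^q) if u^p ≥ v^q, and B(u,v) = u^p + v^q + δ·u²v^{2-q} if u^p ≤ v^q, for u,v ≥ 0. Then B(u,v) ≤ (1 + 2/p)·u^p + (2/q)·v^q for all u,v ≥ 0. -/
/-! Both branches of `Bell` are at most `u ^ p + v ^ q + δ X` with
`X = (2 / p) u ^ p + (1 - 2 / p) v ^ q ≥ 0`: on the first branch `2 / q - 1 = 1 - 2 / p`, on the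
second `u ^ 2 v ^ (2 - q) = (u ^ p) ^ (2 / p) (v ^ q) ^ (1 - 2 / p) ≤ X` by weighted AM-GM.
Since `1 < q ≤ 2` gives `0 ≤ δ ≤ 1`, the bound follows from `2 / q = 2 - 2 / p`. -/

noncomputable def Bell (p q δ u v : ℝ) : ℝ :=
  if v ^ q ≤ u ^ p then
    u ^ p + v ^ q + δ * ((2 / p) * u ^ p + (2 / q - 1) * v ^ q)
  else
    u ^ p + v ^ q + δ * (u ^ (2 : ℝ) * v ^ (2 - q))

section ConjugateExponent

variable {p q : ℝ}

lemma two_div_conj_exponent (hp : 1 < p) (hq : q = p / (p - 1)) : 2 / q = 2 - 2 / p := by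
  have : p - 1 ≠ 0 := by linarith
  rw [hq]
  field_simp

lemma one_lt_conj_exponent (hp : 1 < p) (hq : q = p / (p - 1)) : 1 < q := by
  rw [hq, lt_div_iff₀ (by linarith)]
  linarith

lemma conj_exponent_le_two (hp : 2 ≤ p) (hq : q = p / (p - 1)) : q ≤ 2 := by
  rw [hq, div_le_iff₀ (by linarith)]
  linarith

lemma one_sub_two_div_nonneg (hp : 2 ≤ p) : 0 ≤ 1 - 2 / p := by
  rw [sub_nonneg, div_le_one (by positivity)]
  exact hp

lemma sq_mul_rpow_two_sub_le {u v : ℝ} (hp : 2 ≤ p) (hq : q = p / (p - 1))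
    (hu : 0 ≤ u) (hv : 0 ≤ v) :
    u ^ (2 : ℝ) * v ^ (2 - q) ≤ 2 / p * u ^ p + (1 - 2 / p) * v ^ q := by
  have hp0 : p ≠ 0 := by positivity
  have hp1 : p - 1 ≠ 0 := by linarith
  have hu' : (u ^ p) ^ (2 / p) = u ^ (2 : ℝ) := by
    rw [← Real.rpow_mul hu]
    field_simp
  have hv' : (v ^ q) ^ (1 - 2 / p) = v ^ (2 - q) := by
    rw [← Real.rpow_mul hv, hq]
    congr 1
    field_simp
    ring
  rw [← hu', ← hv']
  exact Real.geom_mean_le_arith_mean2_weighted (by positivity) (one_sub_two_div_nonneg hp)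
    (Real.rpow_nonneg hu p) (Real.rpow_nonneg hv q) (by ring)

end ConjugateExponent

lemma Bell_le_add_mul_weighted_mean {p q δ u v : ℝ} (hp : 2 ≤ p) (hq : q = p / (p - 1))
    (hδ : 0 ≤ δ) (hu : 0 ≤ u) (hv : 0 ≤ v) :
    Bell p q δ u v ≤ u ^ p + v ^ q + δ * (2 / p * u ^ p + (1 - 2 / p) * v ^ q) := by
  unfold Bell
  split_ifs
  · rw [two_div_conj_exponent (by linarith) hq]
    exact le_of_eq (by ring)
  · gcongr
    exact sq_mul_rpow_two_sub_le hp hq hu hv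

theorem bellman_upper_bound (p q δ u v : ℝ) (hp : 2 ≤ p) (hq : q = p / (p - 1))
    (hδ : δ = q * (q - 1) / 8) (hu : 0 ≤ u) (hv : 0 ≤ v) :
    Bell p q δ u v ≤ (1 + 2 / p) * u ^ p + (2 / q) * v ^ q := by
  have hq1 := one_lt_conj_exponent (by linarith) hq
  have hq2 := conj_exponent_le_two hp hq
  have hδ0 : 0 ≤ δ := by rw [hδ]; nlinarith
  have hδ1 : δ ≤ 1 := by rw [hδ]; nlinarith
  have hX : 0 ≤ 2 / p * u ^ p + (1 - 2 / p) * v ^ q := by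
    have := one_sub_two_div_nonneg hp
    positivity
  calc Bell p q δ u v ≤ u ^ p + v ^ q + δ * (2 / p * u ^ p + (1 - 2 / p) * v ^ q) :=
        Bell_le_add_mul_weighted_mean hp hq hδ0 hu hv
    _ ≤ u ^ p + v ^ q + (2 / p * u ^ p + (1 - 2 / p) * v ^ q) := by
        gcongr
        exact mul_le_of_le_one_left hX hδ1
    _ = (1 + 2 / p) * u ^ p + (2 / q) * v ^ q := by
        rw [two_div_conj_exponent (by linarith) hq]
        ring
end

section
/- With B as defined (p ≥ 2, q = p/(p-1), δ = q(q-1)/8), for all u, v > 0 with u^p ≠ v^q one has the lower bound u^{-1}·∂_u B(u,v) ≥ 2δ·v^{2-q}. -/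
/-! Off the curve `u ^ p = v ^ q` the function `u ↦ Bell p q δ u v` agrees near `u` with one
of its two closed-form branches. Dividing their derivatives by `u`, the
branch `u ^ p < v ^ q` gives `p u ^ (p - 2) + 2 δ v ^ (2 - q)`, and the branch `v ^ q < u ^ p`
gives `(p + 2 δ) u ^ (p - 2)`; there `v ^ (2 - q) ≤ u ^ (p - 2)` because
`2 - q = q (p - 2) / p`, so raising `v ^ q < u ^ p` to the power `(p - 2) / p` suffices. -/

open Filter Topology

namespace Bell

variable {p q δ u v : ℝ}

theorem hasDerivAt_of_rpow_lt (hu : 0 < u) (h : u ^ p < v ^ q) :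
    HasDerivAt (fun u' => Bell p q δ u' v) (p * u ^ (p - 1) + 2 * δ * u * v ^ (2 - q)) u := by
  have hnear : ∀ᶠ u' in 𝓝 u, u' ^ p < v ^ q :=
    (Real.continuousAt_rpow_const u p (Or.inl hu.ne')).eventually (Iio_mem_nhds h)
  have hbranch : (fun u' => Bell p q δ u' v) =ᶠ[𝓝 u]
      fun u' => u' ^ p + v ^ q + δ * (u' ^ (2 : ℝ) * v ^ (2 - q)) := by
    filter_upwards [hnear] with u' hu'
    simp only [Bell, if_neg hu'.not_ge]
  have hsq : HasDerivAt (fun x : ℝ => x ^ (2 : ℝ)) (2 * u) u := by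
    convert Real.hasDerivAt_rpow_const (x := u) (p := 2) (Or.inl hu.ne') using 1
    norm_num
  refine HasDerivAt.congr_of_eventuallyEq ?_ hbranch
  refine (((Real.hasDerivAt_rpow_const (Or.inl hu.ne')).add_const (v ^ q)).add
    ((hsq.mul_const (v ^ (2 - q))).const_mul δ)).congr_deriv ?_
  ring

theorem hasDerivAt_of_lt_rpow (hp : p ≠ 0) (hu : 0 < u) (h : v ^ q < u ^ p) :
    HasDerivAt (fun u' => Bell p q δ u' v) ((p + 2 * δ) * u ^ (p - 1)) u := by
  have hnear : ∀ᶠ u' in 𝓝 u, v ^ q < u' ^ p :=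
    (Real.continuousAt_rpow_const u p (Or.inl hu.ne')).eventually (Ioi_mem_nhds h)
  have hbranch : (fun u' => Bell p q δ u' v) =ᶠ[𝓝 u]
      fun u' => u' ^ p + v ^ q + δ * ((2 / p) * u' ^ p + (2 / q - 1) * v ^ q) := by
    filter_upwards [hnear] with u' hu'
    simp only [Bell, if_pos hu'.le]
  have hpow : HasDerivAt (fun x : ℝ => x ^ p) (p * u ^ (p - 1)) u :=
    Real.hasDerivAt_rpow_const (Or.inl hu.ne')
  refine HasDerivAt.congr_of_eventuallyEq ?_ hbranch
  refine ((hpow.add_const (v ^ q)).add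
    (((hpow.const_mul (2 / p)).add_const ((2 / q - 1) * v ^ q)).const_mul δ)).congr_deriv ?_
  field_simp

end Bell

theorem Real.rpow_two_sub_conjExponent_le_rpow_sub_two {p q u v : ℝ} (hp : 2 ≤ p)
    (hq : q = p / (p - 1)) (hu : 0 ≤ u) (hv : 0 ≤ v) (h : v ^ q ≤ u ^ p) :
    v ^ (2 - q) ≤ u ^ (p - 2) := by
  have hp0 : p ≠ 0 := by linarith
  have hp1 : p - 1 ≠ 0 := by linarith
  have hexp_v : q * ((p - 2) / p) = 2 - q := by
    rw [hq]; field_simp; ring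
  have hexp_u : p * ((p - 2) / p) = p - 2 := by field_simp
  have hroot := Real.rpow_le_rpow (Real.rpow_nonneg hv q) h
    (div_nonneg (by linarith) (by linarith) : 0 ≤ (p - 2) / p)
  rwa [← Real.rpow_mul hv, ← Real.rpow_mul hu, hexp_v, hexp_u] at hroot

theorem Real.inv_mul_rpow_sub_one {u : ℝ} (hu : 0 < u) (p : ℝ) :
    u⁻¹ * u ^ (p - 1) = u ^ (p - 2) := by
  rw [show p - 2 = (p - 1) - 1 by ring, Real.rpow_sub_one hu.ne' (p - 1), inv_mul_eq_div]

theorem bellman_first_derivative_u (p q δ u v : ℝ) (hp : 2 ≤ p) (hq : q = p / (p - 1))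
    (hδ : δ = q * (q - 1) / 8) (hu : 0 < u) (hv : 0 < v) (hne : u ^ p ≠ v ^ q) :
    2 * δ * v ^ (2 - q) ≤ u⁻¹ * deriv (fun u' => Bell p q δ u' v) u := by
  have hq1 : 1 ≤ q := by
    rw [hq, le_div_iff₀ (by linarith)]; linarith
  have hδ0 : 0 ≤ δ := by
    have : 0 ≤ q - 1 := by linarith
    rw [hδ]; positivity
  have hpow : 0 ≤ u ^ (p - 2) := Real.rpow_nonneg hu.le _
  rcases hne.lt_or_gt with h | h
  · rw [(Bell.hasDerivAt_of_rpow_lt hu h).deriv]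
    have hsplit : u⁻¹ * (p * u ^ (p - 1) + 2 * δ * u * v ^ (2 - q))
        = p * u ^ (p - 2) + 2 * δ * v ^ (2 - q) := by
      rw [← Real.inv_mul_rpow_sub_one hu]; field_simp
    rw [hsplit]
    nlinarith
  · rw [(Bell.hasDerivAt_of_lt_rpow (by linarith) hu h).deriv, mul_left_comm,
      Real.inv_mul_rpow_sub_one hu]
    have := Real.rpow_two_sub_conjExponent_le_rpow_sub_two hp hq hu.le hv.le h.le
    nlinarith [Real.rpow_nonneg hv.le (2 - q)]
end

section
/- With B as defined (p ≥ 2, q = p/(p-1), δ = q(q-1)/8), for all u, v > 0 with u^p ≠ v^q one has v^{-1}·∂_v B(u,v) ≥ 2δ·v^{q-2}. -/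
theorem bellman_first_derivative_v (p q δ u v : ℝ) (hp : 2 ≤ p) (hq : q = p / (p - 1))
    (hδ : δ = q * (q - 1) / 8) (hu : 0 < u) (hv : 0 < v) (hne : u ^ p ≠ v ^ q) :
    2 * δ * v ^ (q - 2) ≤ v⁻¹ * deriv (fun v' => Bell p q δ u v') v := by
  have hp1 : (1 : ℝ) < p := by linarith
  have hpm1 : (0 : ℝ) < p - 1 := by linarith
  have hq1 : 1 < q := by
    rw [hq, lt_div_iff₀ hpm1]; linarith
  have hq2 : q ≤ 2 := by
    rw [hq, div_le_iff₀ hpm1]; linarith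
  have hq1' : 1 < q := by
    rw [hq, lt_div_iff₀ hpm1]; linarith
  have hδ0 : 0 ≤ δ := by
    rw [hδ]; nlinarith
  have hδ1 : δ ≤ 1 / 4 := by
    rw [hδ]; nlinarith
  have hq0 : 0 < q := by linarith
  have hcont : ContinuousAt (fun v' : ℝ => v' ^ q) v :=
    Real.continuousAt_rpow_const v q (Or.inl hv.ne')
  have hvq2 : (0:ℝ) < v ^ (q - 2) := Real.rpow_pos_of_pos hv _
  have hpow : HasDerivAt (fun v' : ℝ => v' ^ q) (q * v ^ (q - 1)) v := by
    simpa using Real.hasDerivAt_rpow_const (Or.inl hv.ne')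
  have hvm : v⁻¹ * v ^ (q - 1) = v ^ (q - 2) := by
    rw [← Real.rpow_neg_one v, ← Real.rpow_add hv]; ring_nf
  rcases lt_or_gt_of_ne hne with h | h
  · -- u^p < v^q, second branch
    have hev : ∀ᶠ v' in nhds v, (fun v' => Bell p q δ u v') v'
        = u ^ p + v' ^ q + δ * u ^ (2:ℝ) * v' ^ (2 - q) := by
      have h' : ∀ᶠ v' in nhds v, u ^ p < v' ^ q :=
        ContinuousAt.eventually_lt (f := fun _ : ℝ => u ^ p) continuousAt_const hcont h
      filter_upwards [h'] with v' hv'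
      simp only [Bell, if_neg (not_le.mpr hv')]; ring
    have hpow2 : HasDerivAt (fun v' : ℝ => v' ^ (2 - q)) ((2 - q) * v ^ (2 - q - 1)) v := by
      simpa using Real.hasDerivAt_rpow_const (p := 2 - q) (Or.inl hv.ne')
    have hd : HasDerivAt (fun v' : ℝ => u ^ p + v' ^ q + δ * u ^ (2:ℝ) * v' ^ (2 - q))
        (q * v ^ (q - 1) + δ * u ^ (2:ℝ) * ((2 - q) * v ^ (2 - q - 1))) v :=
      ((hpow.const_add _).add (hpow2.const_mul _))
    rw [Filter.EventuallyEq.deriv_eq hev, hd.deriv]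
    have hterm : 0 ≤ δ * u ^ (2:ℝ) * ((2 - q) * v ^ (2 - q - 1)) := by
      have h1 := Real.rpow_pos_of_pos hv (2 - q - 1)
      have h2 := Real.rpow_pos_of_pos hu (2:ℝ)
      exact mul_nonneg (mul_nonneg hδ0 h2.le)
        (mul_nonneg (by linarith) h1.le)
    have hvi : 0 ≤ v⁻¹ := by positivity
    have : 2 * δ * v ^ (q - 2) ≤ q * v ^ (q - 2) := by nlinarith
    calc 2 * δ * v ^ (q - 2) ≤ q * v ^ (q - 2) := this
      _ = v⁻¹ * (q * v ^ (q - 1)) := by rw [← hvm]; ring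
      _ ≤ v⁻¹ * (q * v ^ (q - 1) + δ * u ^ (2:ℝ) * ((2 - q) * v ^ (2 - q - 1))) :=
            mul_le_mul_of_nonneg_left (le_add_of_nonneg_right hterm) hvi
  · -- v^q < u^p, first branch
    have hev : ∀ᶠ v' in nhds v, (fun v' => Bell p q δ u v') v'
        = (u ^ p + δ * ((2 / p) * u ^ p)) + (1 + δ * (2 / q - 1)) * v' ^ q := by
      have h' : ∀ᶠ v' in nhds v, v' ^ q < u ^ p :=
        ContinuousAt.eventually_lt (g := fun _ : ℝ => u ^ p) hcont continuousAt_const h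
      filter_upwards [h'] with v' hv'
      simp only [Bell, if_pos hv'.le]; ring
    have hd : HasDerivAt
        (fun v' : ℝ => (u ^ p + δ * ((2 / p) * u ^ p)) + (1 + δ * (2 / q - 1)) * v' ^ q)
        ((1 + δ * (2 / q - 1)) * (q * v ^ (q - 1))) v :=
      (hpow.const_mul _).const_add _
    rw [Filter.EventuallyEq.deriv_eq hev, hd.deriv]
    have key : v⁻¹ * ((1 + δ * (2 / q - 1)) * (q * v ^ (q - 1)))
        = (q + δ * (2 - q)) * v ^ (q - 2) := by
      rw [← hvm]
      field_simp
    rw [key]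
    nlinarith [mul_nonneg (mul_nonneg hq0.le (sub_nonneg.mpr (show δ ≤ 1 by linarith))) hvq2.le]
end

section
/- For every u, v > 0 with u^p ≠ v^q, the Hessian quadratic form of the Bellman function B satisfies ∂²_{uu}B(u,v)·α² + 2∂²_{uv}B(u,v)·αβ + ∂²_{vv}B(u,v)·β² ≥ δ·(v^{2-q}α² + v^{q-2}β²) for all real α, β. -/
open Filter Real Topology Finset

noncomputable def hessianForm (F : ℝ → ℝ → ℝ) (u v α β : ℝ) : ℝ :=
  deriv (fun u' => deriv (fun u'' => F u'' v) u') u * α ^ 2 +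
    2 * deriv (fun v' => deriv (fun u' => F u' v') u) v * α * β +
    deriv (fun v' => deriv (fun v'' => F u v'') v') v * β ^ 2

theorem eventuallyEq_slice_left {F G : ℝ → ℝ → ℝ} {x y : ℝ}
    (h : Function.uncurry F =ᶠ[𝓝 (x, y)] Function.uncurry G) :
    (fun x' => F x' y) =ᶠ[𝓝 x] fun x' => G x' y :=
  h.comp_tendsto ((by fun_prop : Continuous fun x' => (x', y)).tendsto x)

theorem eventuallyEq_slice_right {F G : ℝ → ℝ → ℝ} {x y : ℝ}
    (h : Function.uncurry F =ᶠ[𝓝 (x, y)] Function.uncurry G) :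
    (fun y' => F x y') =ᶠ[𝓝 y] fun y' => G x y' :=
  h.comp_tendsto ((by fun_prop : Continuous fun y' => (x, y')).tendsto y)

theorem hessianForm_congr {F G : ℝ → ℝ → ℝ} {u v : ℝ}
    (h : Function.uncurry F =ᶠ[𝓝 (u, v)] Function.uncurry G) (α β : ℝ) :
    hessianForm F u v α β = hessianForm G u v α β := by
  have hnear := h.eventuallyEq_nhds
  have huu : (fun u' => deriv (fun u'' => F u'' v) u') =ᶠ[𝓝 u]
      fun u' => deriv (fun u'' => G u'' v) u' :=
    (((by fun_prop : Continuous fun u' => (u', v)).tendsto u).eventually hnear).mono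
      fun u' hFG => (eventuallyEq_slice_left hFG).deriv_eq
  have huv : (fun v' => deriv (fun u' => F u' v') u) =ᶠ[𝓝 v]
      fun v' => deriv (fun u' => G u' v') u :=
    (((by fun_prop : Continuous fun v' => (u, v')).tendsto v).eventually hnear).mono
      fun v' hFG => (eventuallyEq_slice_left hFG).deriv_eq
  have hvv : (fun v' => deriv (fun v'' => F u v'') v') =ᶠ[𝓝 v]
      fun v' => deriv (fun v'' => G u v'') v' :=
    (((by fun_prop : Continuous fun v' => (u, v')).tendsto v).eventually hnear).mono
      fun v' hFG => (eventuallyEq_slice_right hFG).deriv_eq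
  simp only [hessianForm, huu.deriv_eq, huv.deriv_eq, hvv.deriv_eq]

section GeneralizedPolynomial

variable {ι : Type*} (s : Finset ι)

theorem hasDerivAt_sum_mul_rpow (c r : ι → ℝ) {x : ℝ} (hx : 0 < x) :
    HasDerivAt (fun y => ∑ i ∈ s, c i * y ^ r i)
      (∑ i ∈ s, c i * r i * x ^ (r i - 1)) x := by
  simpa only [mul_assoc] using HasDerivAt.fun_sum fun i _ =>
    (hasDerivAt_rpow_const (p := r i) (Or.inl hx.ne')).const_mul (c i)

theorem deriv_deriv_sum_mul_rpow (c r : ι → ℝ) {x : ℝ} (hx : 0 < x) :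
    deriv (fun y => deriv (fun z => ∑ i ∈ s, c i * z ^ r i) y) x =
      ∑ i ∈ s, c i * r i * (r i - 1) * x ^ (r i - 2) := by
  have hderiv : (fun y => deriv (fun z => ∑ i ∈ s, c i * z ^ r i) y) =ᶠ[𝓝 x]
      fun y => ∑ i ∈ s, c i * r i * y ^ (r i - 1) :=
    (eventually_gt_nhds hx).mono fun y hy => (hasDerivAt_sum_mul_rpow s c r hy).deriv
  rw [hderiv.deriv_eq,
    (hasDerivAt_sum_mul_rpow s (fun i => c i * r i) (fun i => r i - 1) hx).deriv]
  simp only [sub_sub, one_add_one_eq_two]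

theorem hessianForm_sum_mul_rpow_mul_rpow (a r t : ι → ℝ) {u v : ℝ} (hu : 0 < u) (hv : 0 < v)
    (α β : ℝ) :
    hessianForm (fun x y => ∑ i ∈ s, a i * x ^ r i * y ^ t i) u v α β =
      (∑ i ∈ s, a i * r i * (r i - 1) * u ^ (r i - 2) * v ^ t i) * α ^ 2 +
      2 * (∑ i ∈ s, a i * r i * t i * u ^ (r i - 1) * v ^ (t i - 1)) * α * β +
      (∑ i ∈ s, a i * t i * (t i - 1) * u ^ r i * v ^ (t i - 2)) * β ^ 2 := by
  have hslice : ∀ y, (fun x => ∑ i ∈ s, a i * x ^ r i * y ^ t i) =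
      fun x => ∑ i ∈ s, (a i * y ^ t i) * x ^ r i := fun y =>
    funext fun x => sum_congr rfl fun i _ => mul_right_comm _ _ _
  have hderiv_u : ∀ y, deriv (fun x => ∑ i ∈ s, a i * x ^ r i * y ^ t i) u =
      ∑ i ∈ s, (a i * r i * u ^ (r i - 1)) * y ^ t i := fun y => by
    rw [hslice, (hasDerivAt_sum_mul_rpow s _ r hu).deriv]
    exact sum_congr rfl fun i _ => by ring
  simp only [hessianForm, hderiv_u]
  rw [hslice, deriv_deriv_sum_mul_rpow s _ _ hu, deriv_deriv_sum_mul_rpow s _ _ hv,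
    (hasDerivAt_sum_mul_rpow s _ t hv).deriv]
  simp only [mul_comm, mul_assoc, mul_left_comm]

end GeneralizedPolynomial

theorem Real.HolderConjugate.rpow_le_rpow_iff_le_rpow_sub_one {p q x y : ℝ}
    (h : p.HolderConjugate q) (hx : 0 < x) (hy : 0 ≤ y) :
    y ^ q ≤ x ^ p ↔ y ≤ x ^ (p - 1) := by
  conv_lhs => rw [← h.sub_one_mul_conj, rpow_mul hx.le]
  rw [rpow_le_rpow_iff hy (by positivity) h.symm.pos]

theorem Bell_eventuallyEq_of_vpow_lt {p q δ u v : ℝ} (hu : 0 < u) (hv : 0 < v)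
    (h : v ^ q < u ^ p) :
    Function.uncurry (Bell p q δ) =ᶠ[𝓝 (u, v)] Function.uncurry fun x y =>
      ∑ i : Fin 2,
        ![1 + δ * (2 / p), 1 + δ * (2 / q - 1)] i * x ^ ![p, 0] i * y ^ ![0, q] i := by
  filter_upwards [(continuousAt_snd.rpow_const (Or.inl hv.ne')).eventually_lt
    (continuousAt_fst.rpow_const (Or.inl hu.ne')) h] with ⟨x, y⟩ hz
  simp only [Function.uncurry_apply_pair, Bell, hz.le, if_true, Fin.sum_univ_two,
    Matrix.cons_val_zero, Matrix.cons_val_one, rpow_zero, mul_one]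
  ring

theorem Bell_eventuallyEq_of_upow_lt {p q δ u v : ℝ} (hu : 0 < u) (hv : 0 < v)
    (h : u ^ p < v ^ q) :
    Function.uncurry (Bell p q δ) =ᶠ[𝓝 (u, v)] Function.uncurry fun x y =>
      ∑ i : Fin 3, ![1, 1, δ] i * x ^ ![p, 0, 2] i * y ^ ![0, q, 2 - q] i := by
  filter_upwards [(continuousAt_fst.rpow_const (Or.inl hu.ne')).eventually_lt
    (continuousAt_snd.rpow_const (Or.inl hv.ne')) h] with ⟨x, y⟩ hz
  simp only [Function.uncurry_apply_pair, Bell, not_le.mpr hz, if_false, Fin.sum_univ_three,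
    Matrix.cons_val_zero, Matrix.cons_val_one, Matrix.cons_val_two, Matrix.tail_cons,
    Matrix.head_cons, rpow_zero, mul_one]
  ring

theorem hessianForm_Bell_of_vpow_lt {p q δ u v : ℝ} (hu : 0 < u) (hv : 0 < v)
    (h : v ^ q < u ^ p) (α β : ℝ) :
    hessianForm (Bell p q δ) u v α β =
      (1 + δ * (2 / p)) * p * (p - 1) * u ^ (p - 2) * α ^ 2 +
      (1 + δ * (2 / q - 1)) * q * (q - 1) * v ^ (q - 2) * β ^ 2 := by
  rw [hessianForm_congr (Bell_eventuallyEq_of_vpow_lt hu hv h),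
    hessianForm_sum_mul_rpow_mul_rpow _ _ _ _ hu hv]
  norm_num [Fin.sum_univ_two]

theorem hessianForm_Bell_of_upow_lt {p q δ u v : ℝ} (hu : 0 < u) (hv : 0 < v)
    (h : u ^ p < v ^ q) (α β : ℝ) :
    hessianForm (Bell p q δ) u v α β =
      (p * (p - 1) * u ^ (p - 2) + 2 * δ * v ^ (2 - q)) * α ^ 2 +
      2 * (2 * δ * (2 - q) * (u * v ^ (1 - q))) * α * β +
      (q * (q - 1) - δ * (2 - q) * (q - 1) * (u * v ^ (1 - q)) ^ 2) * v ^ (q - 2) * β ^ 2 := by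
  rw [hessianForm_congr (Bell_eventuallyEq_of_upow_lt hu hv h),
    hessianForm_sum_mul_rpow_mul_rpow _ _ _ _ hu hv]
  have hsq : (u * v ^ (1 - q)) ^ 2 * v ^ (q - 2) = u ^ 2 * v ^ (-q) := by
    rw [mul_pow, ← rpow_natCast (v ^ _), ← rpow_mul hv.le, mul_assoc, ← rpow_add hv]
    congr 2
    push_cast
    ring
  norm_num [Fin.sum_univ_three, Matrix.cons_val_two, show 2 - q - 1 = 1 - q by ring]
  linear_combination (δ * (2 - q) * (q - 1) * β ^ 2) * hsq

theorem delta_form_le_diagonal {p q δ X Y P α β : ℝ} (hp : 2 ≤ p) (hq1 : 1 ≤ q)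
    (hq2 : q ≤ 2) (hδ : δ = q * (q - 1) / 8) (hX : 0 ≤ X) (hXP : X ≤ P) (hY : 0 ≤ Y) :
    δ * (X * α ^ 2 + Y * β ^ 2) ≤
      (1 + δ * (2 / p)) * p * (p - 1) * P * α ^ 2 +
      (1 + δ * (2 / q - 1)) * q * (q - 1) * Y * β ^ 2 := by
  have hδ0 : 0 ≤ δ := by rw [hδ]; nlinarith
  have hδ2 : δ ≤ 2 := by rw [hδ]; nlinarith
  have hα : δ * X ≤ (1 + δ * (2 / p)) * p * (p - 1) * P := by
    have hcoeff : (1 + δ * (2 / p)) * p = p + 2 * δ := by field_simp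
    have htwo : 2 ≤ (p + 2 * δ) * (p - 1) := by nlinarith
    rw [hcoeff]
    nlinarith [mul_le_mul_of_nonneg_right htwo (hX.trans hXP),
      mul_le_mul_of_nonneg_right hδ2 hX]
  have hβ : δ ≤ (1 + δ * (2 / q - 1)) * q * (q - 1) := by
    have hcoeff : (1 + δ * (2 / q - 1)) * q = q + δ * (2 - q) := by field_simp
    rw [hcoeff]
    nlinarith [mul_nonneg (mul_nonneg hδ0 (sub_nonneg.2 hq2)) (sub_nonneg.2 hq1)]
  nlinarith [mul_le_mul_of_nonneg_right hα (sq_nonneg α),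
    mul_le_mul_of_nonneg_right hβ (mul_nonneg hY (sq_nonneg β))]

theorem delta_form_le_coupled {q δ P X Y s α β : ℝ} (hq1 : 1 ≤ q) (hq2 : q ≤ 2)
    (hδ : δ = q * (q - 1) / 8) (hP : 0 ≤ P) (hX : 0 ≤ X) (hXY : X * Y = 1)
    (hs : s ^ 2 ≤ 1) :
    δ * (X * α ^ 2 + Y * β ^ 2) ≤
      (P + 2 * δ * X) * α ^ 2 + 2 * (2 * δ * (2 - q) * s) * α * β +
      (q * (q - 1) - δ * (2 - q) * (q - 1) * s ^ 2) * Y * β ^ 2 := by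
  have hδ0 : 0 ≤ δ := by rw [hδ]; nlinarith
  have hY : 0 ≤ Y := by nlinarith
  have hsquare : 0 ≤ δ * X * (α + 2 * (2 - q) * s * Y * β) ^ 2 := by positivity
  have hrest :
      0 ≤ (7 - (2 - q) * (q - 1) * s ^ 2 - 4 * (2 - q) ^ 2 * s ^ 2) * δ * Y * β ^ 2 := by
    have hcoeff : (2 - q) * (q - 1) * s ^ 2 + 4 * (2 - q) ^ 2 * s ^ 2 ≤ 7 := by
      nlinarith [mul_nonneg (sub_nonneg.2 hq2) (sub_nonneg.2 hq1), sq_nonneg s]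
    exact mul_nonneg (mul_nonneg (mul_nonneg (by linarith) hδ0) hY) (sq_nonneg β)
  linear_combination mul_nonneg hP (sq_nonneg α) + hsquare + hrest +
    (4 * (2 - q) * s * δ * β * (α + (2 - q) * s * Y * β)) * hXY + 8 * Y * β ^ 2 * hδ

theorem bellman_hessian_bound (p q δ u v : ℝ) (hp : 2 ≤ p) (hq : q = p / (p - 1))
    (hδ : δ = q * (q - 1) / 8) (hu : 0 < u) (hv : 0 < v) (hne : u ^ p ≠ v ^ q)
    (α β : ℝ) :
    δ * (v ^ (2 - q) * α ^ 2 + v ^ (q - 2) * β ^ 2) ≤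
      (deriv (fun u' => deriv (fun u'' => Bell p q δ u'' v) u') u) * α ^ 2 +
      2 * (deriv (fun v' => deriv (fun u' => Bell p q δ u' v') u) v) * α * β +
      (deriv (fun v' => deriv (fun v'' => Bell p q δ u v'') v') v) * β ^ 2 := by
  have hpq : p.HolderConjugate q := (holderConjugate_iff_eq_conjExponent (by linarith)).2 hq
  have hq1 : 1 ≤ q := hpq.symm.lt.le
  have hq2 : q ≤ 2 := by rw [hq, div_le_iff₀ hpq.sub_one_pos]; linarith
  change _ ≤ hessianForm (Bell p q δ) u v α β
  rcases hne.lt_or_gt with h | h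
  · have huv : u ≤ v ^ (q - 1) := (hpq.symm.rpow_le_rpow_iff_le_rpow_sub_one hv hu.le).1 h.le
    have hs : u * v ^ (1 - q) ≤ 1 := calc
      u * v ^ (1 - q) ≤ v ^ (q - 1) * v ^ (1 - q) := by gcongr
      _ = 1 := by rw [← rpow_add hv]; norm_num
    rw [hessianForm_Bell_of_upow_lt hu hv h]
    have hP : 0 ≤ p * (p - 1) * u ^ (p - 2) := by
      have := hpq.sub_one_pos
      positivity
    refine delta_form_le_coupled hq1 hq2 hδ hP (by positivity) ?_ ?_
    · rw [← rpow_add hv]; norm_num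
    · exact pow_le_one₀ (by positivity) hs
  · have hvu : v ≤ u ^ (p - 1) := (hpq.rpow_le_rpow_iff_le_rpow_sub_one hu hv.le).1 h.le
    have hX : v ^ (2 - q) ≤ u ^ (p - 2) := calc
      v ^ (2 - q) ≤ (u ^ (p - 1)) ^ (2 - q) := by gcongr
      _ = u ^ (p - 2) := by
        rw [← rpow_mul hu.le]; congr 1; linear_combination -hpq.sub_one_mul_conj
    rw [hessianForm_Bell_of_vpow_lt hu hv h]
    exact delta_form_le_diagonal hp hq1 hq2 hδ (by positivity) hX (by positivity)
end
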